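/- Let σ be a type and let R = MvPolynomial σ K be the polynomial algebra. Let B ⊆ R be the K-linear span of the monomials of even total degree and V ⊆ R the K-linear span of the monomials of odd total degree, so that R = B ⊕ V is a ℤ/2-graded K-algebra with even part B and odd part V. Then every element in the image of the multiplication-induced map μ : V ⊗_B V → B has vanishing constant coefficient; in particular, 1 is not in the image of μ and μ is not surjective. -/

import Mathlib

/-!
Multiplication `V ⊗_K V → R` descends to `V ⊗_B V` because the balancing relators
`(v b) v' - v (b v')` vanish by associativity. Every monomial of odd degree has zero
constant term and the constant term is multiplicative, so the image of `μ` lies in the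
augmentation ideal `ker constantCoeff`, which is proper; hence `1 ∉ range μ` although
`1 ∈ B`.
-/

open scoped TensorProduct

/-- The `K`-linear span of the monomials of even total degree in `MvPolynomial σ K`
(the even part of the `ℤ/2`-grading by total degree). -/
noncomputable def evenPart (σ K : Type) [Field K] : Submodule K (MvPolynomial σ K) :=
  Submodule.span K {p : MvPolynomial σ K |
    ∃ d : σ →₀ ℕ, Even (d.sum fun _ n => n) ∧ p = MvPolynomial.monomial d (1 : K)}

/-- The `K`-linear span of the monomials of odd total degree in `MvPolynomial σ K`
(the odd part of the `ℤ/2`-grading by total degree). -/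
noncomputable def oddPart (σ K : Type) [Field K] : Submodule K (MvPolynomial σ K) :=
  Submodule.span K {p : MvPolynomial σ K |
    ∃ d : σ →₀ ℕ, Odd (d.sum fun _ n => n) ∧ p = MvPolynomial.monomial d (1 : K)}

instance grTensorV_addCommGroup (K A : Type) [Field K] [Ring A] [Algebra K A]
    (V : Submodule K A) : AddCommGroup (TensorProduct K V V) :=
  TensorProduct.addCommGroup

/-- The relative tensor product `V ⊗_B V` of the odd part `V` with itself over the even
part `B`, realized as the quotient of `V ⊗_K V` by the `K`-span of the balancing relators
`(v·b) ⊗ v' - v ⊗ (b·v')` for `b ∈ B`. -/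
noncomputable abbrev grTensorV (K A : Type) [Field K] [Ring A] [Algebra K A]
    (B V : Submodule K A) : Type :=
  (TensorProduct K V V) ⧸ (Submodule.span K {x : TensorProduct K V V |
    ∃ (v v' b : A) (hv : v ∈ V) (hv' : v' ∈ V) (_ : b ∈ B) (hvb : v * b ∈ V)
      (hbv' : b * v' ∈ V),
      x = (⟨v * b, hvb⟩ : V) ⊗ₜ[K] (⟨v', hv'⟩ : V)
            - (⟨v, hv⟩ : V) ⊗ₜ[K] (⟨b * v', hbv'⟩ : V)})

open TensorProduct

section GradedTensor

variable {K A : Type} [Field K] [Ring A] [Algebra K A] {B V : Submodule K A}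

lemma range_lift_mul_comp_mapIncl (V W : Submodule K A) :
    LinearMap.range (lift (LinearMap.mul K A) ∘ₗ mapIncl V W) = V * W := by
  rw [Submodule.mul_eq_map₂, map₂_eq_range_lift_comp_mapIncl]

noncomputable def grMul (hVV : V * V ≤ B) : grTensorV K A B V →ₗ[K] B :=
  Submodule.liftQ _
    ((lift (LinearMap.mul K A) ∘ₗ mapIncl V V).codRestrict B fun x =>
      hVV (range_lift_mul_comp_mapIncl V V ▸ LinearMap.mem_range_self _ x))
    (Submodule.span_le.2 <| by
      rintro _ ⟨v, v', b, hv, hv', -, hvb, hbv', rfl⟩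
      ext
      simp [mul_assoc])

@[simp]
lemma coe_grMul_mk_tmul (hVV : V * V ≤ B) (v w : V) :
    (grMul hVV (Submodule.Quotient.mk (v ⊗ₜ w)) : A) = v * w :=
  rfl

lemma coe_grMul_mem_ideal (hVV : V * V ≤ B) {I : Ideal A} (hVI : V ≤ I.restrictScalars K)
    (x : grTensorV K A B V) : (grMul hVV x : A) ∈ I := by
  obtain ⟨y, rfl⟩ := Submodule.Quotient.mk_surjective _ x
  induction y using TensorProduct.induction_on with
  | zero => simp
  | tmul v w =>
    rw [coe_grMul_mk_tmul]
    exact I.mul_mem_left _ (hVI w.2)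
  | add y z hy hz => simpa [Submodule.Quotient.mk_add] using I.add_mem hy hz

lemma one_notMem_range_grMul (hVV : V * V ≤ B) {I : Ideal A} (hVI : V ≤ I.restrictScalars K)
    (hI : I ≠ ⊤) (h1 : (1 : A) ∈ B) : (⟨1, h1⟩ : B) ∉ Set.range (grMul hVV) := by
  rintro ⟨x, hx⟩
  have h1I : (1 : A) ∈ I := by simpa [hx] using coe_grMul_mem_ideal hVV hVI x
  exact (Ideal.ne_top_iff_one I).1 hI h1I

lemma not_surjective_grMul (hVV : V * V ≤ B) {I : Ideal A} (hVI : V ≤ I.restrictScalars K)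
    (hI : I ≠ ⊤) (h1 : (1 : A) ∈ B) : ¬ Function.Surjective (grMul hVV) := fun hsurj =>
  one_notMem_range_grMul hVV hVI hI h1 (hsurj _)

end GradedTensor

section Polynomial

variable (σ K : Type) [Field K]

open MvPolynomial

lemma oddPart_mul_oddPart_le : oddPart σ K * oddPart σ K ≤ evenPart σ K := by
  classical
  rw [oddPart, Submodule.span_mul_span, Submodule.span_le]
  rintro _ ⟨_, ⟨d, hd, rfl⟩, _, ⟨e, he, rfl⟩, rfl⟩
  refine Submodule.subset_span ⟨d + e, ?_, by simp [monomial_mul]⟩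
  rw [Finsupp.sum_add_index (by simp) (by simp)]
  exact hd.add_odd he

lemma oddPart_le_ker_constantCoeff :
    oddPart σ K ≤ (RingHom.ker (constantCoeff (σ := σ) (R := K))).restrictScalars K := by
  classical
  rw [oddPart, Submodule.span_le]
  rintro _ ⟨d, hd, rfl⟩
  have hd0 : d ≠ 0 := by
    rintro rfl
    simp at hd
  simp [constantCoeff_monomial, hd0]

lemma one_mem_evenPart : (1 : MvPolynomial σ K) ∈ evenPart σ K :=
  Submodule.subset_span ⟨0, by simp, by simp⟩

end Polynomial

theorem stmt_13_general (σ K : Type) [Field K] :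
    ∃ μ : grTensorV K (MvPolynomial σ K) (evenPart σ K) (oddPart σ K) →ₗ[K] evenPart σ K,
      (∀ (v v' : MvPolynomial σ K) (hv : v ∈ oddPart σ K) (hv' : v' ∈ oddPart σ K)
          (h : v * v' ∈ evenPart σ K),
        μ (Submodule.Quotient.mk
            ((⟨v, hv⟩ : oddPart σ K) ⊗ₜ[K] (⟨v', hv'⟩ : oddPart σ K))) = ⟨v * v', h⟩) ∧
      (∀ x, MvPolynomial.coeff 0 ((μ x : evenPart σ K) : MvPolynomial σ K) = 0) ∧
      (∀ h1 : (1 : MvPolynomial σ K) ∈ evenPart σ K,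
        (⟨1, h1⟩ : evenPart σ K) ∉ Set.range μ) ∧
      ¬ Function.Surjective μ := by
  have hVV := oddPart_mul_oddPart_le σ K
  have hVI := oddPart_le_ker_constantCoeff σ K
  have hI := RingHom.ker_ne_top (MvPolynomial.constantCoeff (σ := σ) (R := K))
  refine ⟨grMul hVV, fun v v' hv hv' h => rfl, fun x => ?_,
    one_notMem_range_grMul hVV hVI hI,
    not_surjective_grMul hVV hVI hI (one_mem_evenPart σ K)⟩
  rw [← MvPolynomial.constantCoeff_eq, ← RingHom.mem_ker]
  exact coe_grMul_mem_ideal hVV hVI x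

/-- For the polynomial algebra `R = MvPolynomial σ K` with its
`ℤ/2`-grading `R = B ⊕ V` by even/odd total degree, every element in the image of the
multiplication-induced map `μ : V ⊗_B V → B` has vanishing constant coefficient; in
particular `1` is not in the image of `μ`, and `μ` is not surjective. -/
theorem stmt_13 (σ K : Type) [Field K] [CharZero K] :
    ∃ μ : grTensorV K (MvPolynomial σ K) (evenPart σ K) (oddPart σ K) →ₗ[K] evenPart σ K,
      (∀ (v v' : MvPolynomial σ K) (hv : v ∈ oddPart σ K) (hv' : v' ∈ oddPart σ K)
          (h : v * v' ∈ evenPart σ K),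
        μ (Submodule.Quotient.mk
            ((⟨v, hv⟩ : oddPart σ K) ⊗ₜ[K] (⟨v', hv'⟩ : oddPart σ K))) = ⟨v * v', h⟩) ∧
      (∀ x, MvPolynomial.coeff 0 ((μ x : evenPart σ K) : MvPolynomial σ K) = 0) ∧
      (∀ h1 : (1 : MvPolynomial σ K) ∈ evenPart σ K,
        (⟨1, h1⟩ : evenPart σ K) ∉ Set.range μ) ∧
      ¬ Function.Surjective μ :=
  stmt_13_general σ K
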